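/- arXiv:1805.02485 — 3 statements merged into one kernel-verified Lean document; each statement's English description precedes it below -/
import Mathlib

section
/- Let T = A* D A with A ∈ C^{M×N} of full rank M and D ∈ C^{M×M} a regular diagonal matrix, and let T = U Σ V* be a reduced singular value decomposition with Σ ∈ R^{M×M} positive definite diagonal and U, V ∈ C^{N×M} with U*U = V*V = Id. Then the M×M matrices AU and AV are regular, and Σ^{-1} = (AV)^{-1} D^{-1} (AU)^{-*}. -/
open scoped Matrix

theorem stmt_7 (M N : ℕ) (A : Matrix (Fin M) (Fin N) ℂ) (hA : A.rank = M)
    (c : Fin M → ℂ) (hc : ∀ j, c j ≠ 0)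
    (σ : Fin M → ℝ) (hσ : ∀ i, 0 < σ i)
    (U V : Matrix (Fin N) (Fin M) ℂ)
    (hU : Uᴴ * U = 1) (hV : Vᴴ * V = 1)
    (hSVD : Aᴴ * Matrix.diagonal c * A =
      U * Matrix.diagonal (fun i => (σ i : ℂ)) * Vᴴ) :
    IsUnit (A * U) ∧ IsUnit (A * V) ∧
      (Matrix.diagonal (fun i => (σ i : ℂ)))⁻¹ =
        (A * V)⁻¹ * (Matrix.diagonal c)⁻¹ * ((A * U)ᴴ)⁻¹ := by
  have key : (A * U)ᴴ * Matrix.diagonal c * (A * V)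
      = Matrix.diagonal (fun i => (σ i : ℂ)) := by
    calc (A * U)ᴴ * Matrix.diagonal c * (A * V)
        = Uᴴ * (Aᴴ * Matrix.diagonal c * A) * V := by
          simp [Matrix.conjTranspose_mul, Matrix.mul_assoc]
      _ = Uᴴ * (U * Matrix.diagonal (fun i => (σ i : ℂ)) * Vᴴ) * V := by rw [hSVD]
      _ = (Uᴴ * U) * Matrix.diagonal (fun i => (σ i : ℂ)) * (Vᴴ * V) := by
          simp [Matrix.mul_assoc]
      _ = _ := by rw [hU, hV, Matrix.one_mul, Matrix.mul_one]
  have hSigma : IsUnit (Matrix.diagonal (fun i => (σ i : ℂ))) := by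
    rw [Matrix.isUnit_iff_isUnit_det, Matrix.det_diagonal, isUnit_iff_ne_zero]
    exact Finset.prod_ne_zero_iff.2 fun i _ => by
      exact_mod_cast Complex.ofReal_ne_zero.2 (hσ i).ne'
  have hprod : IsUnit ((A * U)ᴴ * Matrix.diagonal c * (A * V)) := key ▸ hSigma
  rw [Matrix.isUnit_iff_isUnit_det, Matrix.det_mul, Matrix.det_mul] at hprod
  have hAUH : IsUnit ((A * U)ᴴ) := Matrix.isUnit_iff_isUnit_det _ |>.2
    (isUnit_of_mul_isUnit_left (isUnit_of_mul_isUnit_left hprod))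
  have hAV : IsUnit (A * V) := Matrix.isUnit_iff_isUnit_det _ |>.2
    (isUnit_of_mul_isUnit_right hprod)
  have hAU : IsUnit (A * U) := by
    rw [← Matrix.isUnit_conjTranspose]; exact hAUH
  refine ⟨hAU, hAV, ?_⟩
  rw [← key, Matrix.mul_inv_rev, Matrix.mul_inv_rev]
  exact (Matrix.mul_assoc _ _ _).symm
end

section
/- Let z_1,...,z_M ∈ C^d be pairwise distinct, A = (z_j^k)_{j=1..M, k∈I_n} the multivariate Vandermonde matrix (where z_j^k = Π_ℓ z_{j,ℓ}^{k_ℓ}, I_n = {0,...,n}^d) of full rank M, D = diag(c_1,...,c_M) with all c_j ≠ 0, and T_ℓ = A* D_ℓ A with D_ℓ = diag(c_1 z_{1,ℓ}, ..., c_M z_{M,ℓ}). Let T = A* D A = U Σ V* be a reduced SVD and S_ℓ := U* T_ℓ V Σ^{-1}. Then W_0 := (AU)* satisfies W_0^{-1} S_ℓ W_0 = diag(z_{1,ℓ}, ..., z_{M,ℓ}) for all ℓ = 1,...,d. -/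
open scoped Matrix

theorem stmt_8 (d M n : ℕ) (z : Fin M → Fin d → ℂ)
    (hz : Function.Injective z)
    (A : Matrix (Fin M) (Fin d → Fin (n + 1)) ℂ)
    (hAdef : ∀ j k, A j k = ∏ ℓ, z j ℓ ^ (k ℓ : ℕ))
    (hA : A.rank = M)
    (c : Fin M → ℂ) (hc : ∀ j, c j ≠ 0)
    (σ : Fin M → ℝ) (hσ : ∀ i, 0 < σ i)
    (U V : Matrix (Fin d → Fin (n + 1)) (Fin M) ℂ)
    (hU : Uᴴ * U = 1) (hV : Vᴴ * V = 1)
    (hSVD : Aᴴ * Matrix.diagonal c * A =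
      U * Matrix.diagonal (fun i => (σ i : ℂ)) * Vᴴ) :
    ∀ ℓ : Fin d,
      ((A * U)ᴴ)⁻¹ *
          (Uᴴ * (Aᴴ * Matrix.diagonal (fun j => c j * z j ℓ) * A) * V *
            (Matrix.diagonal (fun i => (σ i : ℂ)))⁻¹) *
          (A * U)ᴴ =
        Matrix.diagonal (fun j => z j ℓ) := by
  intro ℓ
  have hσ0 : ∀ i, (σ i : ℂ) ≠ 0 := fun i => by
    exact_mod_cast Complex.ofReal_ne_zero.mpr (hσ i).ne'
  set Sg : Matrix (Fin M) (Fin M) ℂ := Matrix.diagonal (fun i => (σ i : ℂ)) with hSg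
  set Sgi : Matrix (Fin M) (Fin M) ℂ := Matrix.diagonal (fun i => ((σ i : ℂ))⁻¹) with hSgi
  have hSg1 : Sg * Sgi = 1 := by
    rw [hSg, hSgi, Matrix.diagonal_mul_diagonal]
    have : (fun i => (σ i : ℂ) * ((σ i : ℂ))⁻¹) = fun _ => (1 : ℂ) :=
      funext fun i => mul_inv_cancel₀ (hσ0 i)
    rw [this, Matrix.diagonal_one]
  have hSginv : Sg⁻¹ = Sgi := Matrix.inv_eq_right_inv hSg1
  set G : Matrix (Fin M) (Fin M) ℂ := Uᴴ * Aᴴ with hG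
  set D : Matrix (Fin M) (Fin M) ℂ := Matrix.diagonal c with hD
  set X : Matrix (Fin M) (Fin M) ℂ := A * V * Sgi with hX
  have key : G * (D * X) = 1 := by
    have h1 : Uᴴ * (Aᴴ * D * A) = Sg * Vᴴ := by
      rw [hSVD, ← Matrix.mul_assoc, ← Matrix.mul_assoc, hU, Matrix.one_mul]
    calc G * (D * X) = (Uᴴ * (Aᴴ * D * A)) * V * Sgi := by
            rw [hG, hX]
            simp only [Matrix.mul_assoc]
      _ = Sg * (Vᴴ * V) * Sgi := by rw [h1]; simp only [Matrix.mul_assoc]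
      _ = 1 := by rw [hV, Matrix.mul_one, hSg1]
  have hGinvtbl : Invertible G := invertibleOfRightInverse _ _ key
  have hGinv : G⁻¹ = D * X := Matrix.inv_eq_right_inv key
  have hAUH : (A * U)ᴴ = G := by rw [Matrix.conjTranspose_mul, hG]
  have hmid : Uᴴ * (Aᴴ * Matrix.diagonal (fun j => c j * z j ℓ) * A) * V * Sg⁻¹ =
      G * (Matrix.diagonal (fun j => z j ℓ) * G⁻¹) := by
    rw [hGinv, hSginv]
    have hDZ : Matrix.diagonal (fun j => c j * z j ℓ) =
        Matrix.diagonal (fun j => z j ℓ) * D := by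
      rw [hD, Matrix.diagonal_mul_diagonal]
      have : (fun j => c j * z j ℓ) = fun i => z i ℓ * c i := funext fun j => mul_comm _ _
      rw [this]
    rw [hDZ, hG, hX]
    simp only [Matrix.mul_assoc]
  rw [hAUH, hmid]
  have h2 : G⁻¹ * G = 1 := Matrix.nonsing_inv_mul G (Matrix.isUnit_iff_isUnit_det G |>.mp (isUnit_of_invertible G))
  calc G⁻¹ * (G * (Matrix.diagonal (fun j => z j ℓ) * G⁻¹)) * G
      = (G⁻¹ * G) * Matrix.diagonal (fun j => z j ℓ) * (G⁻¹ * G) := by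
        simp only [Matrix.mul_assoc]
    _ = Matrix.diagonal (fun j => z j ℓ) := by rw [h2, Matrix.one_mul, Matrix.mul_one]
end

section
/- For every integer d ≥ 1, 1/B(1/2, d − 1/2) ≤ √(d/π), where B is the Beta function. -/
open scoped Real

theorem stmt_15 (d : ℕ) (hd : 1 ≤ d) :
    1 / (Real.Gamma (1 / 2) * Real.Gamma ((d : ℝ) - 1 / 2) / Real.Gamma d) ≤
      Real.sqrt (d / π) := by
  have hd1 : (1:ℝ) ≤ (d:ℝ) := by exact_mod_cast hd
  set x : ℝ := (d:ℝ) - 1/2 with hx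
  have hx0 : 0 < x := by simp only [hx]; linarith
  have hGx : 0 < Real.Gamma x := Real.Gamma_pos_of_pos hx0
  have hGd : 0 < Real.Gamma (d:ℝ) := Real.Gamma_pos_of_pos (by linarith)
  have key := Real.Gamma_mul_add_mul_le_rpow_Gamma_mul_rpow_Gamma hx0
    (by linarith : (0:ℝ) < x + 1) (by norm_num : (0:ℝ) < 1/2)
    (by norm_num : (0:ℝ) < 1/2) (by norm_num)
  have harg : (1/2 : ℝ) * x + 1/2 * (x + 1) = (d:ℝ) := by
    simp only [hx]; ring
  rw [harg] at key
  have hG1 : Real.Gamma (x + 1) = x * Real.Gamma x := Real.Gamma_add_one (ne_of_gt hx0)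
  have hsq : Real.Gamma x ^ (1/2:ℝ) * Real.Gamma x ^ (1/2:ℝ) = Real.Gamma x := by
    rw [← Real.rpow_add hGx]; norm_num
  have key2 : Real.Gamma (d:ℝ) ≤ Real.Gamma x * Real.sqrt x := by
    calc Real.Gamma (d:ℝ) ≤ Real.Gamma x ^ (1/2:ℝ) * Real.Gamma (x+1) ^ (1/2:ℝ) := key
      _ = (Real.Gamma x ^ (1/2:ℝ) * Real.Gamma x ^ (1/2:ℝ)) * x ^ (1/2:ℝ) := by
          rw [hG1, Real.mul_rpow hx0.le hGx.le]; ring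
      _ = Real.Gamma x * Real.sqrt x := by rw [hsq, Real.sqrt_eq_rpow]
  have key3 : Real.Gamma (d:ℝ) ≤ Real.Gamma x * Real.sqrt (d:ℝ) := by
    refine key2.trans (mul_le_mul_of_nonneg_left ?_ hGx.le)
    exact Real.sqrt_le_sqrt (by simp only [hx]; linarith)
  have hπ : 0 < Real.sqrt π := Real.sqrt_pos.mpr Real.pi_pos
  rw [Real.Gamma_one_half_eq, Real.sqrt_div (Nat.cast_nonneg d) π, one_div_div,
    div_le_div_iff₀ (by positivity) hπ]
  nlinarith [key3, hπ.le, hGx.le, Real.sqrt_nonneg (d:ℝ), Real.sq_sqrt Real.pi_pos.le]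
end
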